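/- arXiv:2208.01526 — 4 statements merged into one kernel-verified Lean document; each statement's English description precedes it below -/
import Mathlib

section
/- Let m ≥ 1, λ ∈ ℂ, θ ∈ ℝ with λ e^{-i(θ+2πp/m)} ≠ 1 for all p, and define the m×m matrix S = c(θ) D⁻¹ 1 1ᵀ, where c(θ) = (1/m)(1 - (λ e^{-iθ})^m), D is the diagonal matrix with entries D_{pp} = 1 - λ e^{-i(θ+2πp/m)}, and 1 is the all-ones vector. Then S is idempotent: S·S = S. -/
open Complex Real Matrix

private lemma key_sum (m : ℕ) (hm : 1 ≤ m) (x w : ℂ) (hw : w ^ m = 1)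
    (hwj : ∀ j, 0 < j → j < m → w ^ j ≠ 1)
    (hd : ∀ p : Fin m, 1 - x * w ^ (p : ℕ) ≠ 0) :
    ((1 / (m : ℂ)) * (1 - x ^ m)) * (∑ p : Fin m, (1 - x * w ^ (p : ℕ))⁻¹) = 1 := by
  have hm0 : (m : ℂ) ≠ 0 := Nat.cast_ne_zero.mpr (by omega)
  have hd' : ∀ p ∈ Finset.range m, 1 - x * w ^ p ≠ 0 := fun p hp =>
    hd ⟨p, Finset.mem_range.mp hp⟩
  have step : ∀ p ∈ Finset.range m, (1 - x ^ m) * (1 - x * w ^ p)⁻¹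
      = ∑ j ∈ Finset.range m, (x * w ^ p) ^ j := by
    intro p hp
    have h1 : 1 - x ^ m = 1 - (x * w ^ p) ^ m := by
      rw [mul_pow, ← pow_mul, mul_comm p m, pow_mul, hw, one_pow, mul_one]
    have hgeom : (∑ j ∈ Finset.range m, (x * w ^ p) ^ j) * (1 - x * w ^ p)
        = 1 - (x * w ^ p) ^ m := by
      have h2 := geom_sum_mul (x * w ^ p) m
      linear_combination -h2
    rw [h1, ← hgeom, mul_assoc, mul_inv_cancel₀ (hd' p hp), mul_one]
  have key : ∑ p ∈ Finset.range m, (1 - x ^ m) * (1 - x * w ^ p)⁻¹ = (m : ℂ) := by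
    rw [Finset.sum_congr rfl step, Finset.sum_comm]
    have inner : ∀ j ∈ Finset.range m, (∑ p ∈ Finset.range m, (x * w ^ p) ^ j)
        = if j = 0 then (m : ℂ) else 0 := by
      intro j hj
      rcases Nat.eq_zero_or_pos j with h | h
      · simp [h]
      · rw [if_neg (by omega)]
        have hz : ∀ p, (x * w ^ p) ^ j = x ^ j * (w ^ j) ^ p := by
          intro p
          rw [mul_pow, ← pow_mul, ← pow_mul, mul_comm p j]
        simp_rw [hz, ← Finset.mul_sum]
        rw [geom_sum_eq (hwj j h (Finset.mem_range.mp hj))]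
        have : (w ^ j) ^ m = 1 := by
          rw [← pow_mul, mul_comm j m, pow_mul, hw, one_pow]
        rw [this, sub_self, zero_div, mul_zero]
    rw [Finset.sum_congr rfl inner, Finset.sum_ite_eq' (Finset.range m) 0 (fun _ => (m : ℂ)),
      if_pos (Finset.mem_range.mpr (by omega))]
  rw [Fin.sum_univ_eq_sum_range (fun p => (1 - x * w ^ p)⁻¹) m, mul_assoc,
    Finset.mul_sum, key, one_div, inv_mul_cancel₀ hm0]

/-- Idempotence of the F-relaxation Fourier symbol `S = c(θ) D⁻¹ 1 1ᵀ`. -/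
theorem stmt4 (m : ℕ) (hm : 1 ≤ m) (l : ℂ) (θ : ℝ)
    (hD : ∀ p : Fin m,
      l * Complex.exp (-((θ : ℂ) + 2 * Real.pi * p / m) * Complex.I) ≠ 1) :
    let c : ℂ := (1 / (m : ℂ)) * (1 - (l * Complex.exp (-(θ : ℂ) * Complex.I)) ^ m)
    let D : Matrix (Fin m) (Fin m) ℂ :=
      Matrix.diagonal (fun p =>
        1 - l * Complex.exp (-((θ : ℂ) + 2 * Real.pi * p / m) * Complex.I))
    let S : Matrix (Fin m) (Fin m) ℂ :=
      c • (D⁻¹ * Matrix.of (fun _ _ => (1 : ℂ)))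
    S * S = S := by
  intro c D S
  have hm0 : (m : ℂ) ≠ 0 := Nat.cast_ne_zero.mpr (by omega)
  set x : ℂ := l * Complex.exp (-(θ : ℂ) * Complex.I) with hx
  set w : ℂ := Complex.exp (-(2 * (Real.pi : ℂ) / m) * Complex.I) with hwdef
  set d : Fin m → ℂ := fun p =>
    1 - l * Complex.exp (-((θ : ℂ) + 2 * Real.pi * p / m) * Complex.I) with hddef
  -- rewrite d in terms of x, w
  have hdx : ∀ p : Fin m, d p = 1 - x * w ^ (p : ℕ) := by
    intro p
    have : -((θ : ℂ) + 2 * Real.pi * p / m) * Complex.I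
        = (-(θ : ℂ) * Complex.I) + (p : ℕ) * (-(2 * (Real.pi : ℂ) / m) * Complex.I) := by
      ring
    rw [hddef, hx, hwdef]
    simp only [this, Complex.exp_add, Complex.exp_nat_mul]
    ring
  have hdne : ∀ p : Fin m, d p ≠ 0 := by
    intro p h
    exact hD p (by rwa [hddef, sub_eq_zero, eq_comm] at h)
  have hw : w ^ m = 1 := by
    rw [hwdef, ← Complex.exp_nat_mul]
    have : (m : ℂ) * (-(2 * (Real.pi : ℂ) / m) * Complex.I) = (-1 : ℤ) * (2 * Real.pi * Complex.I) := by
      push_cast; field_simp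
    rw [this, Complex.exp_int_mul_two_pi_mul_I]
  have hwj : ∀ j, 0 < j → j < m → w ^ j ≠ 1 := by
    intro j hj hjm h
    rw [hwdef, ← Complex.exp_nat_mul, Complex.exp_eq_one_iff] at h
    obtain ⟨n, hn⟩ := h
    have hπ : (Real.pi : ℂ) ≠ 0 := by
      exact_mod_cast Complex.ofReal_ne_zero.mpr Real.pi_ne_zero
    have hI : Complex.I ≠ 0 := Complex.I_ne_zero
    have hj' : ((j : ℤ) : ℂ) = ((-n * m : ℤ) : ℂ) := by
      push_cast at hn ⊢
      field_simp at hn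
      have hne : (2 * (Real.pi : ℂ) * Complex.I) ≠ 0 := by
        simp [hπ, hI]
      have h3 : (-(j : ℂ)) * (2 * (Real.pi : ℂ) * Complex.I)
          = ((n : ℂ) * m) * (2 * (Real.pi : ℂ) * Complex.I) := by
        linear_combination (2 * (Real.pi : ℂ) * Complex.I) * hn
      have h4 := mul_right_cancel₀ hne h3
      linear_combination -h4
    have : (j : ℤ) = -n * m := by exact_mod_cast hj'
    have hmj : (m : ℤ) ∣ (j : ℤ) := ⟨-n, by linarith [this]⟩
    have := Int.le_of_dvd (by exact_mod_cast hj) hmj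
    omega
  have hd1 : ∀ p : Fin m, 1 - x * w ^ (p : ℕ) ≠ 0 := fun p => hdx p ▸ hdne p
  have hc1 : c * ∑ k : Fin m, (d k)⁻¹ = 1 := by
    simp_rw [hdx]
    exact key_sum m hm x w hw hwj hd1
  -- D⁻¹ is diagonal of inverses
  have hDinv : D⁻¹ = Matrix.diagonal (fun p => (d p)⁻¹) := by
    apply Matrix.inv_eq_right_inv
    rw [show D = Matrix.diagonal d from rfl, Matrix.diagonal_mul_diagonal]
    simp only [fun p => mul_inv_cancel₀ (hdne p)]
    exact Matrix.diagonal_one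
  have hS : ∀ p q, S p q = c * (d p)⁻¹ := by
    intro p q
    simp [S, hDinv, Matrix.diagonal_mul]
  ext p q
  rw [Matrix.mul_apply, hS p q]
  simp_rw [hS]
  rw [← Finset.mul_sum, ← Finset.mul_sum, hc1, mul_one]
end

section
/- Let m ≥ 1, λ ∈ ℂ with |λ| < 1, θ ∈ ℝ such that λ e^{-i(θ+2πp/m)} ≠ 1 for all p, D the diagonal m×m matrix with entries 1 - λ e^{-i(θ+2πp/m)}, c(θ) = (1/m)(1-(λe^{-iθ})^m), and a = c(θ) D⁻¹ 1. Then ∑_{p=0}^{m-1} |a_p|² = (1/m) (1 - |λ|^{2m})/(1 - |λ|²). -/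
open Complex Real Finset

/-- The squared ℓ²-norm of the column `a = c(θ) D⁻¹ 1` of the F-relaxation symbol:
`∑_p |a_p|² = (1/m)(1 - |λ|^{2m})/(1 - |λ|²)`. -/
theorem stmt11 (m : ℕ) (hm : 1 ≤ m) (l : ℂ) (hl : ‖l‖ < 1) (θ : ℝ)
    (hD : ∀ p : Fin m,
      l * Complex.exp (-((θ : ℂ) + 2 * Real.pi * p / m) * Complex.I) ≠ 1) :
    let c : ℂ := (1 / (m : ℂ)) * (1 - (l * Complex.exp (-(θ : ℂ) * Complex.I)) ^ m)
    let a : Fin m → ℂ := fun p =>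
      c * (1 - l * Complex.exp (-((θ : ℂ) + 2 * Real.pi * p / m) * Complex.I))⁻¹
    ∑ p : Fin m, (‖a p‖) ^ 2
      = (1 / m) * ((1 - (‖l‖) ^ (2 * m)) / (1 - (‖l‖) ^ 2)) := by
  intro c a
  have hm0 : (m:ℂ) ≠ 0 := Nat.cast_ne_zero.mpr (by omega)
  have hmR : (m:ℝ) ≠ 0 := Nat.cast_ne_zero.mpr (by omega)
  set ζ : ℂ := Complex.exp (-(2*(Real.pi:ℂ)/m) * Complex.I) with hζdef
  set w : ℂ := l * Complex.exp (-(θ:ℂ) * Complex.I) with hwdef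
  -- ζ^m = 1
  have hζm : ζ ^ m = 1 := by
    rw [hζdef, ← Complex.exp_nat_mul]
    have h1 : (m:ℂ) * (-(2*(Real.pi:ℂ)/m) * Complex.I)
        = ((-1 : ℤ) : ℂ) * (2*(Real.pi:ℂ)*Complex.I) := by
      field_simp
      ring
    rw [h1, Complex.exp_int_mul_two_pi_mul_I]
  -- conj ζ
  have hconjζ : (starRingEnd ℂ) ζ = Complex.exp ((2*(Real.pi:ℂ)/m) * Complex.I) := by
    rw [hζdef, ← Complex.exp_conj]
    congr 1
    simp [map_div₀, Complex.conj_I, map_ofNat]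
  -- z_p = w * ζ^p
  have hz : ∀ p : Fin m,
      l * Complex.exp (-((θ : ℂ) + 2 * Real.pi * p / m) * Complex.I) = w * ζ ^ (p:ℕ) := by
    intro p
    rw [hwdef, hζdef, ← Complex.exp_nat_mul, mul_assoc l, ← Complex.exp_add]
    congr 2
    push_cast
    ring
  -- a p as geometric sum
  have key : ∀ p : Fin m, a p = (1/(m:ℂ)) * ∑ r ∈ range m, (w * ζ ^ (p:ℕ)) ^ r := by
    intro p
    have hne : w * ζ ^ (p:ℕ) ≠ 1 := by rw [← hz]; exact hD p
    have hpow : (w * ζ ^ (p:ℕ)) ^ m = w ^ m := by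
      rw [mul_pow, ← pow_mul, mul_comm (p:ℕ) m, pow_mul, hζm, one_pow, mul_one]
    rw [geom_sum_eq hne, hpow]
    show c * (1 - l * Complex.exp _)⁻¹ = _
    rw [hz p]
    show (1 / (m : ℂ)) * (1 - w ^ m) * (1 - w * ζ ^ (p:ℕ))⁻¹ = _
    have h2 : (1 : ℂ) - w * ζ ^ (p:ℕ) ≠ 0 := by
      intro h; exact hne (by linear_combination -h)
    have h3 : (w * ζ ^ (p:ℕ)) - 1 ≠ 0 := sub_ne_zero.mpr hne
    field_simp
    ring
  -- orthogonality
  have orth : ∀ r s : ℕ, r < m → s < m →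
      ∑ p : Fin m, (ζ ^ r * ((starRingEnd ℂ) ζ) ^ s) ^ (p:ℕ)
        = if r = s then (m:ℂ) else 0 := by
    intro r s hr hs
    by_cases hrs : r = s
    · subst hrs
      simp only [if_pos rfl]
      have h1 : ζ ^ r * ((starRingEnd ℂ) ζ) ^ r = 1 := by
        rw [← mul_pow, Complex.mul_conj]
        have : ‖ζ‖ = 1 := by
          rw [hζdef]
          simp [Complex.norm_exp]
        rw [← Complex.sq_norm, this]
        norm_num
      simp [h1]
    · simp only [if_neg hrs]
      set η : ℂ := ζ ^ r * ((starRingEnd ℂ) ζ) ^ s with hηdef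
      have hηm : η ^ m = 1 := by
        rw [hηdef, mul_pow, ← pow_mul, ← pow_mul, mul_comm r m, mul_comm s m,
          pow_mul, pow_mul, hζm, ← map_pow, hζm]
        simp
      have hη1 : η ≠ 1 := by
        rw [hηdef, hconjζ, hζdef, ← Complex.exp_nat_mul, ← Complex.exp_nat_mul,
          ← Complex.exp_add]
        intro h
        obtain ⟨n, hn⟩ := Complex.exp_eq_one_iff.mp h
        have h2πI : (2*(Real.pi:ℂ)*Complex.I) ≠ 0 := by
          simp [Real.pi_ne_zero, Complex.I_ne_zero]
        have h2 : ((s:ℂ) - r)/m * (2*(Real.pi:ℂ)*Complex.I)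
            = (n:ℂ) * (2*(Real.pi:ℂ)*Complex.I) := by
          linear_combination hn
        have h3' : ((s:ℂ) - r)/m = n := mul_right_cancel₀ h2πI h2
        have h2' : ((s:ℂ) - r) = (n:ℂ) * m := by
          field_simp at h3'
          linear_combination h3'
        have h3 : (s:ℤ) - r = n * m := by exact_mod_cast h2'
        have hn1 : (r:ℤ) < m := by exact_mod_cast hr
        have hn2 : (s:ℤ) < m := by exact_mod_cast hs
        have hmz : (0:ℤ) < m := by exact_mod_cast hm
        have h5 : -(m:ℤ) < n*m := by rw [← h3]; omega
        have h6 : n*m < m := by rw [← h3]; omega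
        have h7 : n = 0 := by
          by_contra hn0
          rcases lt_or_gt_of_ne hn0 with hc|hc
          · have hc' : n ≤ -1 := by omega
            nlinarith
          · have hc' : 1 ≤ n := by omega
            nlinarith
        rw [h7] at h3
        simp at h3
        omega
      rw [Fin.sum_univ_eq_sum_range (fun i => η ^ i) m, geom_sum_eq hη1, hηm]
      simp
  -- main computation
  have habsw : Complex.normSq w = (‖l‖)^2 := by
    rw [← Complex.sq_norm, hwdef, norm_mul]
    have h1 : ‖Complex.exp (-(θ:ℂ) * Complex.I)‖ = 1 := by
      simp [Complex.norm_exp]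
    rw [h1, mul_one]
  have hsum : ∑ p : Fin m, a p * (starRingEnd ℂ) (a p)
      = (1/(m:ℂ)) * ∑ r ∈ range m, (((‖l‖ : ℂ))^2) ^ r := by
    have e1 : ∀ p : Fin m, a p * (starRingEnd ℂ) (a p)
        = (1/(m:ℂ))^2 * ∑ r ∈ range m, ∑ s ∈ range m,
            w ^ r * (starRingEnd ℂ) w ^ s * (ζ ^ r * ((starRingEnd ℂ) ζ) ^ s) ^ (p:ℕ) := by
      intro p
      rw [key p]
      have hconjap : (starRingEnd ℂ) ((1/(m:ℂ)) * ∑ r ∈ range m, (w * ζ ^ (p:ℕ)) ^ r)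
          = (1/(m:ℂ)) * ∑ s ∈ range m,
              ((starRingEnd ℂ) w * ((starRingEnd ℂ) ζ) ^ (p:ℕ)) ^ s := by
        simp [map_sum, map_pow, map_mul, map_div₀]
      rw [hconjap, mul_mul_mul_comm, Finset.sum_mul_sum,
        show (1/(m:ℂ)) * (1/(m:ℂ)) = (1/(m:ℂ))^2 by ring]
      congr 1
      refine Finset.sum_congr rfl fun r _ => Finset.sum_congr rfl fun s _ => ?_
      ring
    calc ∑ p : Fin m, a p * (starRingEnd ℂ) (a p)
        = (1/(m:ℂ))^2 * ∑ r ∈ range m, ∑ s ∈ range m,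
            w ^ r * (starRingEnd ℂ) w ^ s
              * ∑ p : Fin m, (ζ ^ r * ((starRingEnd ℂ) ζ) ^ s) ^ (p:ℕ) := by
          simp_rw [e1]
          rw [← Finset.mul_sum]
          congr 1
          rw [Finset.sum_comm]
          refine Finset.sum_congr rfl fun r _ => ?_
          rw [Finset.sum_comm]
          refine Finset.sum_congr rfl fun s _ => ?_
          rw [← Finset.mul_sum]
      _ = (1/(m:ℂ))^2 * ∑ r ∈ range m, ∑ s ∈ range m,
            w ^ r * (starRingEnd ℂ) w ^ s * (if r = s then (m:ℂ) else 0) := by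
          congr 1
          refine Finset.sum_congr rfl fun r hr => Finset.sum_congr rfl fun s hs => ?_
          rw [orth r s (Finset.mem_range.mp hr) (Finset.mem_range.mp hs)]
      _ = (1/(m:ℂ))^2 * ∑ r ∈ range m, w ^ r * (starRingEnd ℂ) w ^ r * m := by
          congr 1
          refine Finset.sum_congr rfl fun r hr => ?_
          simp only [mul_ite, mul_zero]
          rw [Finset.sum_ite_eq]
          simp [Finset.mem_range.mp hr]
      _ = (1/(m:ℂ)) * ∑ r ∈ range m, (((‖l‖ : ℂ))^2) ^ r := by
          rw [Finset.mul_sum, Finset.mul_sum]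
          refine Finset.sum_congr rfl fun r hr => ?_
          have h2 : w ^ r * (starRingEnd ℂ) w ^ r = (((‖l‖ : ℂ))^2) ^ r := by
            rw [← mul_pow, Complex.mul_conj, habsw]
            push_cast
            ring
          rw [h2]
          field_simp
  have hL : ((∑ p : Fin m, (‖a p‖)^2 : ℝ) : ℂ)
      = ∑ p : Fin m, a p * (starRingEnd ℂ) (a p) := by
    push_cast
    refine Finset.sum_congr rfl fun p _ => ?_
    rw [Complex.mul_conj, ← Complex.sq_norm]
    push_cast
    ring
  have hR : ∑ p : Fin m, (‖a p‖)^2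
      = (1/(m:ℝ)) * ∑ r ∈ range m, ((‖l‖)^2) ^ r := by
    have hc : ((∑ p : Fin m, (‖a p‖)^2 : ℝ) : ℂ)
        = (((1/(m:ℝ)) * ∑ r ∈ range m, ((‖l‖)^2) ^ r : ℝ) : ℂ) := by
      rw [hL, hsum]
      push_cast
      ring
    exact_mod_cast hc
  have hL2lt : (‖l‖)^2 < 1 := by
    nlinarith [norm_nonneg l]
  have hL2ne : (‖l‖)^2 ≠ 1 := ne_of_lt hL2lt
  have hden1 : (‖l‖)^2 - 1 ≠ 0 := sub_ne_zero.mpr hL2ne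
  have hden2 : (1:ℝ) - (‖l‖)^2 ≠ 0 := sub_ne_zero.mpr hL2ne.symm
  rw [hR, geom_sum_eq hL2ne m, ← pow_mul]
  field_simp
  ring
end

section
/- Let p ≥ 1 be odd with (p+1)/2 even and let f_{p+1}(z) = [z((p+1)/2 - z)/(p+1)!] ∏_{q=1}^{(p-1)/2}(q² - z²). Then for every integer m ≥ 3, m · f_{p+1}(3/(2m)) > 2 · f_{p+1}(1/2). -/
open Finset

/-- For odd `p` with `(p+1)/2` even and integers `m ≥ 3`:
`m · f_{p+1}(3/(2m)) > 2 · f_{p+1}(1/2)`, where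
`f_{p+1}(z) = [z((p+1)/2 - z)/(p+1)!] ∏_{q=1}^{(p-1)/2}(q² - z²)`. -/
theorem stmt16 (p : ℕ) (hp : Odd p) (hp1 : 1 ≤ p)
    (heven : Even ((p + 1) / 2)) (m : ℕ) (hm : 3 ≤ m) :
    let F : ℝ → ℝ := fun z =>
      z * ((((p + 1) / 2 : ℕ) : ℝ) - z) / (Nat.factorial (p + 1) : ℝ) *
        ∏ q ∈ Finset.Icc 1 ((p - 1) / 2), ((q : ℝ) ^ 2 - z ^ 2)
    (m : ℝ) * F (3 / (2 * m)) > 2 * F (1 / 2) := by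
  intro F
  have hmR : (3:ℝ) ≤ (m:ℝ) := by exact_mod_cast hm
  have hm0 : (0:ℝ) < (m:ℝ) := by linarith
  set a : ℝ := 3 / (2 * (m:ℝ)) with hadef
  have ha0 : 0 < a := by positivity
  have hale : a ≤ 1/2 := by
    rw [hadef, div_le_div_iff₀ (by positivity) (by norm_num)]
    nlinarith
  have hma : (m:ℝ) * a = 3/2 := by
    rw [hadef]; field_simp
  set k := (p - 1) / 2 with hkdef
  set P : ℝ → ℝ := fun z => ∏ q ∈ Finset.Icc 1 k, ((q : ℝ) ^ 2 - z ^ 2) with hPdef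
  have hfac : ∀ q ∈ Finset.Icc 1 k, (1:ℝ) ≤ (q:ℝ)^2 := by
    intro q hq
    have h1 : 1 ≤ q := (Finset.mem_Icc.mp hq).1
    have : (1:ℝ) ≤ (q:ℝ) := by exact_mod_cast h1
    nlinarith
  have hP12pos : 0 < P (1/2) := by
    apply Finset.prod_pos
    intro q hq
    have := hfac q hq
    nlinarith
  have hPle : P (1/2) ≤ P a := by
    apply Finset.prod_le_prod
    · intro q hq; have := hfac q hq; nlinarith
    · intro q hq; nlinarith
  have hn1 : (1:ℝ) ≤ (((p + 1) / 2 : ℕ) : ℝ) := by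
    have h : 1 ≤ (p + 1) / 2 := by omega
    exact_mod_cast h
  set n : ℝ := (((p + 1) / 2 : ℕ) : ℝ) with hndef
  have hfactpos : (0:ℝ) < (Nat.factorial (p + 1) : ℝ) := by positivity
  have h1 : (m:ℝ) * F a = (3/2) * ((n - a) / (Nat.factorial (p + 1) : ℝ) * P a) := by
    show (m:ℝ) * (a * (n - a) / (Nat.factorial (p + 1) : ℝ) * P a) = _
    rw [← hma]; ring
  have h2 : 2 * F (1/2) = (n - 1/2) / (Nat.factorial (p + 1) : ℝ) * P (1/2) := by
    show 2 * ((1/2 : ℝ) * (n - 1/2) / (Nat.factorial (p + 1) : ℝ) * P (1/2)) = _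
    ring
  have hY : 0 < (n - 1/2) / (Nat.factorial (p + 1) : ℝ) * P (1/2) := by
    apply mul_pos _ hP12pos
    apply div_pos (by linarith) hfactpos
  have hXY : (n - 1/2) / (Nat.factorial (p + 1) : ℝ) * P (1/2) ≤
      (n - a) / (Nat.factorial (p + 1) : ℝ) * P a := by
    apply mul_le_mul
    · gcongr <;> linarith
    · exact hPle
    · exact le_of_lt hP12pos
    · apply div_nonneg (by linarith) (le_of_lt hfactpos)
  rw [h1, h2]
  nlinarith
end

section
/- Let p ≥ 1 be odd with (p+1)/2 even and f_{p+1}(z) = [z((p+1)/2 - z)/(p+1)!] ∏_{q=1}^{(p-1)/2}(q² - z²). Then the function g(m) = m f_{p+1}(2/(3m)) is strictly increasing for real m ≥ 2; consequently, since 2 f_{p+1}(1/3) = 2 f_{p+1}(2/3), one has m f_{p+1}(2/(3m)) > 2 f_{p+1}(2/3) for all integers m ≥ 3. -/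
open Finset

private lemma stmt18_sym (t : ℕ) :
    (1/3 : ℝ) * (((t : ℝ) + 1) - 1/3) * ∏ q ∈ Finset.Icc 1 t, ((q : ℝ) ^ 2 - (1/3 : ℝ) ^ 2)
      = (2/3 : ℝ) * (((t : ℝ) + 1) - 2/3) *
        ∏ q ∈ Finset.Icc 1 t, ((q : ℝ) ^ 2 - (2/3 : ℝ) ^ 2) := by
  induction t with
  | zero => norm_num
  | succ n ih =>
      rw [Finset.prod_Icc_succ_top (by omega), Finset.prod_Icc_succ_top (by omega)]
      push_cast
      push_cast at ih
      linear_combination (((n : ℝ) + 5/3) * ((n : ℝ) + 4/3)) * ih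

/-- For odd `p` with `(p+1)/2` even and
`f_{p+1}(z) = [z((p+1)/2 - z)/(p+1)!] ∏_{q=1}^{(p-1)/2}(q² - z²)`:
the function `g(m) = m f_{p+1}(2/(3m))` is strictly increasing on `[2, ∞)`, and
consequently `m f_{p+1}(2/(3m)) > 2 f_{p+1}(2/3)` for all integers `m ≥ 3`. -/
theorem stmt18 (p : ℕ) (hp : Odd p) (hp1 : 1 ≤ p)
    (heven : Even ((p + 1) / 2)) :
    let F : ℝ → ℝ := fun z =>
      z * ((((p + 1) / 2 : ℕ) : ℝ) - z) / (Nat.factorial (p + 1) : ℝ) *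
        ∏ q ∈ Finset.Icc 1 ((p - 1) / 2), ((q : ℝ) ^ 2 - z ^ 2)
    StrictMonoOn (fun m : ℝ => m * F (2 / (3 * m))) (Set.Ici (2 : ℝ)) ∧
    (∀ m : ℕ, 3 ≤ m → (m : ℝ) * F (2 / (3 * m)) > 2 * F (2 / 3)) := by
  intro F
  obtain ⟨t, ht⟩ := hp
  subst ht
  have hn : (2 * t + 1 + 1) / 2 = t + 1 := by omega
  have hk : (2 * t + 1 - 1) / 2 = t := by omega
  have hFdef : F = fun z : ℝ =>
      z * ((((2 * t + 1 + 1) / 2 : ℕ) : ℝ) - z) / (Nat.factorial (2 * t + 1 + 1) : ℝ) *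
        ∏ q ∈ Finset.Icc 1 ((2 * t + 1 - 1) / 2), ((q : ℝ) ^ 2 - z ^ 2) := rfl
  set N : ℝ := (Nat.factorial (2 * t + 1 + 1) : ℝ) with hNdef
  have hNpos : (0 : ℝ) < N := by
    rw [hNdef]; exact_mod_cast Nat.factorial_pos _
  have hF : ∀ z : ℝ, F z = z * (((t : ℝ) + 1) - z) / N *
      ∏ q ∈ Finset.Icc 1 t, ((q : ℝ) ^ 2 - z ^ 2) := by
    intro z
    rw [hFdef]
    simp only [hn, hk]
    push_cast
    ring
  have key : ∀ m : ℝ, 0 < m → m * F (2 / (3 * m)) =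
      2/3 * (((t : ℝ) + 1) - 2 / (3 * m)) / N *
        ∏ q ∈ Finset.Icc 1 t, ((q : ℝ) ^ 2 - (2 / (3 * m)) ^ 2) := by
    intro m hm
    rw [hF]
    have h1 : m * (2 / (3 * m)) = 2/3 := by field_simp
    calc m * (2 / (3 * m) * (((t : ℝ) + 1) - 2 / (3 * m)) / N *
          ∏ q ∈ Finset.Icc 1 t, ((q : ℝ) ^ 2 - (2 / (3 * m)) ^ 2))
        = (m * (2 / (3 * m))) * ((((t : ℝ) + 1) - 2 / (3 * m)) / N *
          ∏ q ∈ Finset.Icc 1 t, ((q : ℝ) ^ 2 - (2 / (3 * m)) ^ 2)) := by ring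
      _ = _ := by rw [h1]; ring
  have hz : ∀ m : ℝ, 2 ≤ m → 0 < 2 / (3 * m) ∧ 2 / (3 * m) ≤ 1/3 := by
    intro m hm
    have hm0 : (0 : ℝ) < m := by linarith
    refine ⟨by positivity, ?_⟩
    rw [div_le_div_iff₀ (by positivity) (by norm_num)]
    linarith
  have hPpos : ∀ m : ℝ, 2 ≤ m →
      0 < ∏ q ∈ Finset.Icc 1 t, ((q : ℝ) ^ 2 - (2 / (3 * m)) ^ 2) := by
    intro m hm
    obtain ⟨hz0, hz1⟩ := hz m hm
    apply Finset.prod_pos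
    intro q hq
    have h1 : (1 : ℝ) ≤ (q : ℝ) := by exact_mod_cast (Finset.mem_Icc.mp hq).1
    nlinarith
  have mono : StrictMonoOn (fun m : ℝ => m * F (2 / (3 * m))) (Set.Ici (2 : ℝ)) := by
    intro a ha b hb hab
    simp only [Set.mem_Ici] at ha hb
    have ha0 : (0 : ℝ) < a := by linarith
    have hb0 : (0 : ℝ) < b := by linarith
    obtain ⟨hza0, hza1⟩ := hz a ha
    obtain ⟨hzb0, hzb1⟩ := hz b hb
    have hzz : 2 / (3 * b) < 2 / (3 * a) := by
      rw [div_lt_div_iff₀ (by positivity) (by positivity)]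
      linarith
    simp only
    rw [key a ha0, key b hb0]
    have hPa := hPpos a ha
    have hPle : ∏ q ∈ Finset.Icc 1 t, ((q : ℝ) ^ 2 - (2 / (3 * a)) ^ 2)
        ≤ ∏ q ∈ Finset.Icc 1 t, ((q : ℝ) ^ 2 - (2 / (3 * b)) ^ 2) := by
      apply Finset.prod_le_prod
      · intro q hq
        have h1 : (1 : ℝ) ≤ (q : ℝ) := by exact_mod_cast (Finset.mem_Icc.mp hq).1
        nlinarith
      · intro q hq
        nlinarith
    have hfab : 2/3 * (((t : ℝ) + 1) - 2 / (3 * a)) / N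
        < 2/3 * (((t : ℝ) + 1) - 2 / (3 * b)) / N := by
      apply div_lt_div_of_pos_right _ hNpos
      linarith
    have hfb : 0 < 2/3 * (((t : ℝ) + 1) - 2 / (3 * b)) / N := by
      apply div_pos _ hNpos
      nlinarith
    exact mul_lt_mul hfab hPle hPa (le_of_lt hfb)
  refine ⟨mono, ?_⟩
  intro m hm
  have hm3 : (3 : ℝ) ≤ (m : ℝ) := by exact_mod_cast hm
  have hlt := mono (show (2:ℝ) ∈ Set.Ici (2:ℝ) from Set.mem_Ici.mpr le_rfl)
    (show (m:ℝ) ∈ Set.Ici (2:ℝ) from Set.mem_Ici.mpr (by linarith))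
    (show (2:ℝ) < (m:ℝ) by linarith)
  simp only at hlt
  have hsym : F (1/3) = F (2/3) := by
    rw [hF, hF]
    linear_combination (stmt18_sym t) / N
  have he : (2 : ℝ) / (3 * 2) = 1/3 := by norm_num
  rw [he] at hlt
  rw [show (2 : ℝ) / 3 = 2/3 from rfl, ← hsym]
  exact hlt
end
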